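/- arXiv:2002.05964 — 2 statements merged into one kernel-verified Lean document; each statement's English description precedes it below -/
import Mathlib

section
/- Let X be a transitive subshift and F: X → X a radius-r cellular automaton. If F has a blocking word, then F is almost equicontinuous (there exists a point of equicontinuity for F). -/
/-- The shift map on bi-infinite sequences. -/
def shiftMap {A : Type*} (x : ℤ → A) : ℤ → A := fun i => x (i + 1)

/-- The `k`-fold shift map (`σ^k`). -/
def shiftPow {A : Type*} (k : ℤ) (x : ℤ → A) : ℤ → A := fun i => x (i + k)

/-- A subshift: a closed shift-invariant subset of `A^ℤ`. -/
def IsSubshift {A : Type*} [TopologicalSpace A] (X : Set (ℤ → A)) : Prop :=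
  IsClosed X ∧ shiftMap '' X = X

/-- The word `w` occurs in `x` at position `i`. -/
def occursAt {A : Type*} (x : ℤ → A) (w : List A) (i : ℤ) : Prop :=
  ∀ (k : ℕ) (hk : k < w.length), x (i + k) = w.get ⟨k, hk⟩

/-- `w` belongs to the language of `X`. -/
def InLang {A : Type*} (X : Set (ℤ → A)) (w : List A) : Prop :=
  ∃ x ∈ X, occursAt x w 0

/-- The set of contexts of a word with respect to `X`. -/
def contexts {A : Type*} (X : Set (ℤ → A)) (w : List A) : Set (List A × List A) :=
  {p | InLang X (p.1 ++ w ++ p.2)}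

/-- `w` is a synchronizing word of `X`. -/
def IsSynchronizing {A : Type*} (X : Set (ℤ → A)) (w : List A) : Prop :=
  InLang X w ∧ ∀ u v : List A, InLang X (u ++ w) → InLang X (w ++ v) → InLang X (u ++ w ++ v)

/-- `X` is a transitive subshift. -/
def IsTransitiveSubshift {A : Type*} (X : Set (ℤ → A)) : Prop :=
  ∀ u v : List A, InLang X u → InLang X v → ∃ w : List A, InLang X (u ++ w ++ v)

/-- A reversible cellular automaton (automorphism) of the subshift `X`. -/
def IsAutomorphism {A : Type*} [TopologicalSpace A] (X : Set (ℤ → A))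
    (F : (ℤ → A) → (ℤ → A)) : Prop :=
  Set.MapsTo F X X ∧ ContinuousOn F X ∧ (∀ x ∈ X, F (shiftMap x) = shiftMap (F x)) ∧
  ∃ G : (ℤ → A) → (ℤ → A), Set.MapsTo G X X ∧ ContinuousOn G X ∧
    (∀ x ∈ X, G (shiftMap x) = shiftMap (G x)) ∧
    (∀ x ∈ X, G (F x) = x) ∧ (∀ x ∈ X, F (G x) = x)

/-- `F` is given on `X` by a local rule of radius `r`. -/
def HasRadius {A : Type*} (X : Set (ℤ → A)) (F : (ℤ → A) → (ℤ → A)) (r : ℕ) : Prop :=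
  ∃ f : (Fin (2 * r + 1) → A) → A, ∀ x ∈ X, ∀ i : ℤ, F x i = f (fun k => x (i - r + k))

/-- `x` is an equicontinuity point of `(X, F)` (combinatorial formulation). -/
def IsEquicontinuityPoint {A : Type*} (X : Set (ℤ → A)) (F : (ℤ → A) → (ℤ → A))
    (x : ℤ → A) : Prop :=
  x ∈ X ∧ ∀ N : ℕ, ∃ M : ℕ, ∀ y ∈ X, (∀ j : ℤ, |j| ≤ (M : ℤ) → y j = x j) →
    ∀ t : ℕ, ∀ j : ℤ, |j| ≤ (N : ℤ) → F^[t] y j = F^[t] x j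

/-!
A point in which the blocking word `w` occurs arbitrarily far to the left and to the right is an
equicontinuity point: two occurrences of `w` are walls of width `e > r` through which no
information travels, so the orbit of the segment between them is determined by that segment
alone. Transitivity of `X` lets one surround the window spanned by two occurrences of `w` by
two new copies of `w` (some `w s W u w` is in the language); iterating gives points that agree
on larger and larger windows, and their limit in the closed set `X` is the required point.
-/

open Set Filter

section Words

variable {A : Type*} {x y : ℤ → A} {u v : List A} {i : ℤ}

lemma occursAt_of_append_left (h : occursAt x (u ++ v) i) : occursAt x u i := by
  intro k hk
  rw [h k (by rw [List.length_append]; omega)]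
  simp [List.getElem_append_left hk]

lemma occursAt_of_append_right (h : occursAt x (u ++ v) i) :
    occursAt x v (i + u.length) := by
  intro k hk
  have := h (u.length + k) (by rw [List.length_append]; omega)
  simp only [List.get_eq_getElem, List.getElem_append_right (Nat.le_add_right _ _),
    Nat.add_sub_cancel_left] at this
  rw [List.get_eq_getElem, ← this]
  push_cast
  ring_nf

lemma occursAt_of_eqOn (h : occursAt x v i) (hxy : EqOn y x (Ico i (i + v.length))) :
    occursAt y v i := fun k hk => by
  rw [hxy ⟨by omega, by omega⟩, h k hk]

lemma eqOn_of_occursAt (hx : occursAt x v i) (hy : occursAt y v i) :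
    EqOn x y (Ico i (i + v.length)) := by
  rintro j ⟨hij, hj⟩
  obtain ⟨k, rfl⟩ : ∃ k : ℕ, j = i + k := ⟨(j - i).toNat, by omega⟩
  rw [hx k (by omega), hy k (by omega)]

lemma occursAt_ofFn (x : ℤ → A) (i : ℤ) (n : ℕ) :
    occursAt x (List.ofFn fun k : Fin n => x (i + k)) i := by
  intro k hk
  simp

lemma occursAt_shiftPow {j d : ℤ} (h : occursAt x v i) (hij : j + d = i) :
    occursAt (shiftPow d x) v j := fun k hk => by
  show x (j + k + d) = _
  rw [show j + k + d = i + k by omega, h k hk]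

lemma shiftMap_injective : Function.Injective (shiftMap : (ℤ → A) → ℤ → A) := by
  intro x y h
  funext i
  simpa [shiftMap] using congrFun h (i - 1)

lemma shiftPow_add_one (k : ℤ) (x : ℤ → A) : shiftPow (k + 1) x = shiftMap (shiftPow k x) := by
  funext i
  simp only [shiftPow, shiftMap]
  ring_nf

lemma HasRadius.apply_eq_of_eqOn {X : Set (ℤ → A)} {F : (ℤ → A) → ℤ → A} {r : ℕ}
    (hrad : HasRadius X F r) (hx : x ∈ X) (hy : y ∈ X)
    (hxy : EqOn x y (Icc (i - r) (i + r))) : F x i = F y i := by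
  obtain ⟨f, hf⟩ := hrad
  rw [hf x hx, hf y hy]
  congr 1
  funext k
  exact hxy ⟨by omega, by omega⟩

end Words

section Subshift

variable {A : Type*} [TopologicalSpace A] {X : Set (ℤ → A)} {x y : ℤ → A} {v : List A}

lemma IsSubshift.shiftMap_mem (hX : IsSubshift X) (hx : x ∈ X) : shiftMap x ∈ X :=
  hX.2 ▸ mem_image_of_mem _ hx

lemma IsSubshift.shiftPow_mem (hX : IsSubshift X) (k : ℤ) (hx : x ∈ X) : shiftPow k x ∈ X := by
  induction k using Int.induction_on with
  | zero => exact (show (fun i => x (i + 0)) ∈ X by simpa using hx)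
  | succ k ih => exact shiftPow_add_one (k : ℤ) x ▸ hX.shiftMap_mem ih
  | pred k ih =>
    obtain ⟨z, hz, hzx⟩ : shiftPow (-(k : ℤ)) x ∈ shiftMap '' X := hX.2.symm ▸ ih
    have : shiftMap (shiftPow (-(k : ℤ) - 1) x) = shiftMap z := by
      rw [← shiftPow_add_one, sub_add_cancel, hzx]
    exact shiftMap_injective this ▸ hz

lemma IsSubshift.inLang_of_occursAt (hX : IsSubshift X) (hx : x ∈ X) {i : ℤ}
    (h : occursAt x v i) : InLang X v :=
  ⟨shiftPow i x, hX.shiftPow_mem i hx, occursAt_shiftPow h (zero_add i)⟩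

variable {F : (ℤ → A) → ℤ → A} {r : ℕ}

lemma HasRadius.apply_shiftPow (hrad : HasRadius X F r) (hX : IsSubshift X) (k : ℤ)
    (hx : x ∈ X) : F (shiftPow k x) = shiftPow k (F x) := by
  obtain ⟨f, hf⟩ := hrad
  funext i
  show F _ i = F x (i + k)
  rw [hf _ (hX.shiftPow_mem k hx), hf x hx]
  congr 1
  funext j
  simp only [shiftPow]
  ring_nf

lemma HasRadius.iterate_shiftPow (hrad : HasRadius X F r) (hX : IsSubshift X)
    (hmaps : MapsTo F X X) (k : ℤ) (t : ℕ) (hx : x ∈ X) :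
    F^[t] (shiftPow k x) = shiftPow k (F^[t] x) := by
  induction t with
  | zero => rfl
  | succ t ih =>
    rw [Function.iterate_succ_apply', Function.iterate_succ_apply', ih,
      hrad.apply_shiftPow hX k (hmaps.iterate t hx)]

end Subshift

/-- The paper's blocking condition, with the constraints `r < e` and `p + e ≤ w.length` left
to the lemmas that need them. -/
def IsBlocking {A : Type*} (X : Set (ℤ → A)) (F : (ℤ → A) → ℤ → A) (w : List A) (e p : ℕ) :
    Prop :=
  ∀ x ∈ X, ∀ y ∈ X, occursAt x w 0 → occursAt y w 0 →
    ∀ t : ℕ, ∀ j : ℤ, (p : ℤ) ≤ j → j < (p : ℤ) + e → F^[t] x j = F^[t] y j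

namespace IsBlocking

variable {A : Type*} [TopologicalSpace A] {X : Set (ℤ → A)} {F : (ℤ → A) → ℤ → A} {r : ℕ}
  {w : List A} {e p : ℕ} {x y : ℤ → A}

lemma eqOn_iterate (hb : IsBlocking X F w e p) (hX : IsSubshift X) (hmaps : MapsTo F X X)
    (hrad : HasRadius X F r) (hx : x ∈ X) (hy : y ∈ X) {c : ℤ} (hxc : occursAt x w c)
    (hyc : occursAt y w c) (t : ℕ) : EqOn (F^[t] x) (F^[t] y) (Ico (c + p) (c + p + e)) := by
  rintro j ⟨hj, hj'⟩
  have h := hb _ (hX.shiftPow_mem c hx) _ (hX.shiftPow_mem c hy)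
    (occursAt_shiftPow hxc (zero_add c)) (occursAt_shiftPow hyc (zero_add c)) t (j - c)
    (by omega) (by omega)
  rw [hrad.iterate_shiftPow hX hmaps c t hx, hrad.iterate_shiftPow hX hmaps c t hy] at h
  simpa [shiftPow] using h

lemma eqOn_iterate_of_eqOn (hb : IsBlocking X F w e p) (hX : IsSubshift X)
    (hmaps : MapsTo F X X) (hrad : HasRadius X F r) (hre : r < e) (hep : p + e ≤ w.length)
    (hx : x ∈ X) (hy : y ∈ X) {a b : ℤ} (hab : a ≤ b) (hxa : occursAt x w a)
    (hxb : occursAt x w b) (hxy : EqOn y x (Ico a (b + w.length))) (t : ℕ) :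
    EqOn (F^[t] x) (F^[t] y) (Ico (a + p) (b + p + e)) := by
  have hya : occursAt y w a := occursAt_of_eqOn hxa (hxy.mono (Ico_subset_Ico le_rfl (by omega)))
  have hyb : occursAt y w b := occursAt_of_eqOn hxb (hxy.mono (Ico_subset_Ico hab le_rfl))
  induction t with
  | zero => exact fun j ⟨hj, hj'⟩ => (hxy ⟨by omega, by omega⟩).symm
  | succ t ih =>
    rintro j ⟨hj, hj'⟩
    rcases lt_or_ge j (a + p + e) with hja | hja
    · exact hb.eqOn_iterate hX hmaps hrad hx hy hxa hya (t + 1) ⟨hj, hja⟩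
    rcases le_or_gt (b + p) j with hjb | hjb
    · exact hb.eqOn_iterate hX hmaps hrad hx hy hxb hyb (t + 1) ⟨hjb, hj'⟩
    rw [Function.iterate_succ_apply', Function.iterate_succ_apply']
    exact hrad.apply_eq_of_eqOn (hmaps.iterate t hx) (hmaps.iterate t hy)
      (ih.mono (Icc_subset_Ico (by omega) (by omega)))

lemma isEquicontinuityPoint (hb : IsBlocking X F w e p) (hX : IsSubshift X)
    (hmaps : MapsTo F X X) (hrad : HasRadius X F r) (hre : r < e) (hep : p + e ≤ w.length)
    (hx : x ∈ X)
    (hocc : ∀ n : ℕ, ∃ a b : ℤ, a ≤ -n ∧ n ≤ b ∧ occursAt x w a ∧ occursAt x w b) :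
    IsEquicontinuityPoint X F x := by
  refine ⟨hx, fun N => ?_⟩
  obtain ⟨a, b, ha, hb', hxa, hxb⟩ := hocc (N + p)
  refine ⟨(b + w.length - a).toNat, fun y hy hyx t j hj => ?_⟩
  have hxy : EqOn y x (Ico a (b + w.length)) := fun i ⟨hi, hi'⟩ =>
    hyx i (abs_le.2 ⟨by omega, by omega⟩)
  rw [abs_le] at hj
  exact (hb.eqOn_iterate_of_eqOn hX hmaps hrad hre hep hx hy (by omega) hxa hxb hxy t
    ⟨by omega, by omega⟩).symm

end IsBlocking

theorem IsClosed.exists_mem_eqOn_of_nested {ι A : Type*} [TopologicalSpace A]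
    {X : Set (ι → A)} (hX : IsClosed X) {z : ℕ → ι → A} (hz : ∀ n, z n ∈ X) {I : ℕ → Set ι}
    (hI : Monotone I) (hcover : ∀ i, ∃ n, i ∈ I n) (hstep : ∀ n, EqOn (z (n + 1)) (z n) (I n)) :
    ∃ x ∈ X, ∀ n, EqOn x (z n) (I n) := by
  have hagree : ∀ m n, m ≤ n → EqOn (z n) (z m) (I m) := by
    intro m n hmn
    induction n, hmn using Nat.le_induction with
    | base => exact eqOn_refl _ _
    | succ n hmn ih => exact fun i hi => (hstep n (hI hmn hi)).trans (ih hi)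
  choose N hN using hcover
  refine ⟨fun i => z (N i) i, hX.mem_of_tendsto (tendsto_pi_nhds.2 fun i => ?_)
    (Eventually.of_forall (f := atTop) hz), fun n i hi => ?_⟩
  · exact tendsto_const_nhds.congr'
      (eventually_atTop.2 ⟨N i, fun n hn => (hagree _ _ hn (hN i)).symm⟩)
  · exact (hagree _ _ (le_max_left (N i) n) (hN i)).symm.trans
      (hagree _ _ (le_max_right _ _) hi)

structure Bracketed {A : Type*} (X : Set (ℤ → A)) (w : List A) where
  pt : ℤ → A
  left : ℤ
  right : ℤ
  mem : pt ∈ X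
  left_le_right : left ≤ right
  occursAt_left : occursAt pt w left
  occursAt_right : occursAt pt w right

namespace Bracketed

variable {A : Type*} [TopologicalSpace A] {X : Set (ℤ → A)} {w : List A}

def window (T : Bracketed X w) : Set ℤ := Ico T.left (T.right + w.length)

lemma exists_extend (hX : IsSubshift X) (htrans : IsTransitiveSubshift X) (hw : w ≠ [])
    (T : Bracketed X w) :
    ∃ T' : Bracketed X w, T'.left < T.left ∧ T.right < T'.right ∧ EqOn T'.pt T.pt T.window := by
  obtain ⟨z, a, b, hz, hab, ha, hb⟩ := T
  have hw0 : 0 < w.length := List.length_pos_iff.2 hw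
  set W := List.ofFn fun k : Fin (b + w.length - a).toNat => z (a + k)
  have hWlen : (W.length : ℤ) = b + w.length - a := by rw [List.length_ofFn]; omega
  have hWz : occursAt z W a := occursAt_ofFn z a _
  have hwlang : InLang X w := hX.inLang_of_occursAt hz ha
  obtain ⟨s, hs⟩ := htrans w W hwlang (hX.inLang_of_occursAt hz hWz)
  obtain ⟨u, y, hy, hyo⟩ := htrans (w ++ s ++ W) w hs hwlang
  have hwsW := occursAt_of_append_left (occursAt_of_append_left hyo)
  have hw₁ := occursAt_of_append_left (occursAt_of_append_left hwsW)
  have hW := occursAt_of_append_right hwsW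
  have hw₂ := occursAt_of_append_right hyo
  simp only [List.length_append, Nat.cast_add] at hW hw₂
  set d : ℤ := w.length + s.length - a
  refine ⟨⟨shiftPow d y, a - w.length - s.length, b + w.length + u.length,
    hX.shiftPow_mem d hy, by omega, occursAt_shiftPow hw₁ (by omega),
    occursAt_shiftPow hw₂ (by omega)⟩, by simp only; omega, by simp only; omega, ?_⟩
  have := eqOn_of_occursAt (occursAt_shiftPow hW (j := a) (d := d) (by omega)) hWz
  rwa [hWlen, add_sub_cancel] at this

end Bracketed

lemma exists_mem_occursAt_unbounded {A : Type*} [TopologicalSpace A] {X : Set (ℤ → A)}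
    {w : List A} (hX : IsSubshift X) (htrans : IsTransitiveSubshift X) (hw : InLang X w)
    (hw0 : w ≠ []) :
    ∃ x ∈ X, ∀ n : ℕ, ∃ a b : ℤ, a ≤ -n ∧ n ≤ b ∧ occursAt x w a ∧ occursAt x w b := by
  obtain ⟨z, hz, hzw⟩ := hw
  choose next hleft hright hnext using Bracketed.exists_extend hX htrans hw0
  set T : ℕ → Bracketed X w := fun n => next^[n] ⟨z, 0, 0, hz, le_rfl, hzw, hzw⟩
  have hT : ∀ n, T (n + 1) = next (T n) := fun n => Function.iterate_succ_apply' _ _ _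
  have hTleft : ∀ n : ℕ, (T n).left ≤ -n := by
    intro n
    induction n with
    | zero => exact le_rfl
    | succ n ih => have := hleft (T n); rw [← hT] at this; push_cast; omega
  have hTright : ∀ n : ℕ, n ≤ (T n).right := by
    intro n
    induction n with
    | zero => exact le_rfl
    | succ n ih => have := hright (T n); rw [← hT] at this; push_cast; omega
  have hmono : Monotone fun n => (T n).window := monotone_nat_of_le_succ fun n => by
    rw [hT]
    exact Ico_subset_Ico (hleft _).le (by have := hright (T n); omega)
  obtain ⟨x, hx, hxT⟩ := hX.1.exists_mem_eqOn_of_nested (fun n => (T n).mem) hmono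
    (fun j => ⟨j.natAbs + 1, by
      have := hTleft (j.natAbs + 1); have := hTright (j.natAbs + 1)
      simp only [Bracketed.window, mem_Ico]; omega⟩)
    (fun n => hT n ▸ hnext (T n))
  refine ⟨x, hx, fun n => ⟨(T n).left, (T n).right, hTleft n, hTright n, ?_, ?_⟩⟩
  · exact occursAt_of_eqOn (T n).occursAt_left
      ((hxT n).mono (Ico_subset_Ico le_rfl (by have := (T n).left_le_right; omega)))
  · exact occursAt_of_eqOn (T n).occursAt_right
      ((hxT n).mono (Ico_subset_Ico (T n).left_le_right le_rfl))

theorem stmt9_general {A : Type*} [TopologicalSpace A]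
    (X : Set (ℤ → A)) (hX : IsSubshift X) (htrans : IsTransitiveSubshift X)
    (F : (ℤ → A) → (ℤ → A)) (r : ℕ)
    (hmaps : Set.MapsTo F X X) (hrad : HasRadius X F r)
    (w : List A) (hw : InLang X w)
    (hblock : ∃ e p : ℕ, e ≤ w.length ∧ r + 1 ≤ e ∧ p + e ≤ w.length ∧
      ∀ x ∈ X, ∀ y ∈ X, occursAt x w 0 → occursAt y w 0 →
        ∀ t : ℕ, ∀ j : ℤ, (p : ℤ) ≤ j → j < (p : ℤ) + e → F^[t] x j = F^[t] y j) :
    ∃ x, IsEquicontinuityPoint X F x := by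
  obtain ⟨e, p, hew, hre, hep, hb⟩ := hblock
  have hw0 : w ≠ [] := List.ne_nil_of_length_pos (by omega)
  obtain ⟨x, hx, hocc⟩ := exists_mem_occursAt_unbounded hX htrans hw hw0
  exact ⟨x, IsBlocking.isEquicontinuityPoint hb hX hmaps hrad hre hep hx hocc⟩

/-- On a transitive subshift, a radius-`r` CA admitting a blocking word is
almost equicontinuous: it has an equicontinuity point. -/
theorem stmt9 {A : Type*} [Finite A] [TopologicalSpace A] [DiscreteTopology A]
    (X : Set (ℤ → A)) (hX : IsSubshift X) (htrans : IsTransitiveSubshift X)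
    (F : (ℤ → A) → (ℤ → A)) (r : ℕ)
    (hmaps : Set.MapsTo F X X) (hrad : HasRadius X F r)
    (w : List A) (hw : InLang X w)
    (hblock : ∃ e p : ℕ, e ≤ w.length ∧ r + 1 ≤ e ∧ p + e ≤ w.length ∧
      ∀ x ∈ X, ∀ y ∈ X, occursAt x w 0 → occursAt y w 0 →
        ∀ t : ℕ, ∀ j : ℤ, (p : ℤ) ≤ j → j < (p : ℤ) + e → F^[t] x j = F^[t] y j) :
    ∃ x, IsEquicontinuityPoint X F x :=
  stmt9_general X hX htrans F r hmaps hrad w hw hblock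
end

section
/- Let X_S be a non-sofic S-gap shift. For every F ∈ Aut(X_S) there exists i ∈ ℤ such that F(X_{S,ℓ}) ⊆ σ^i(X_{S,ℓ}) and F(X_{S,→}) ⊆ σ^i(X_{S,→}), where X_{S,ℓ} = {x ∈ X_S : x[0,∞] = 01^∞} and X_{S,→} = {x ∈ X_S : x[−∞,0] = ^∞10}. -/
/-- The generating word `0 1^n` of an `S`-gap shift. -/
def genWord (n : ℕ) : List Bool := false :: List.replicate n true

/-- `w` is a concatenation of generating words `0 1^n`, `n ∈ S`. -/
def InGenStar (S : Set ℕ) (w : List Bool) : Prop :=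
  ∃ l : List ℕ, (∀ n ∈ l, n ∈ S) ∧ w = (l.map genWord).flatten

/-- The subword `x[i, i+n-1]` of a configuration. -/
def wordAt {A : Type*} (x : ℤ → A) (i : ℤ) (n : ℕ) : List A :=
  (List.range n).map fun k => x (i + k)

/-- The `S`-gap shift: configurations all of whose finite subwords occur in some
concatenation of the generating words. -/
def SGap (S : Set ℕ) : Set (ℤ → Bool) :=
  {x | ∀ (i : ℤ) (n : ℕ), ∃ w : List Bool, InGenStar S w ∧ (wordAt x i n) <:+: w}

/-- The characteristic sequence of `S` is eventually periodic. -/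
def EventuallyPeriodic (S : Set ℕ) : Prop :=
  ∃ p > 0, ∃ N : ℕ, ∀ n ≥ N, (n ∈ S ↔ n + p ∈ S)

/-- `X_{S,ℓ}`: points whose right tail from `0` is `01^∞`. -/
def SGapLeft (S : Set ℕ) : Set (ℤ → Bool) :=
  {x | x ∈ SGap S ∧ x 0 = false ∧ ∀ i : ℤ, 0 < i → x i = true}

/-- `X_{S,→}`: points whose left tail up to `0` is `^∞10`. -/
def SGapRight (S : Set ℕ) : Set (ℤ → Bool) :=
  {x | x ∈ SGap S ∧ x 0 = false ∧ ∀ i : ℤ, i < 0 → x i = true}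

/-!
For infinite `S`, a configuration lies in `X_S` exactly when every gap between two consecutive
zeros has its length in `S`. In particular `0` is synchronizing: points of `X_S` sharing a `0`
can be spliced there.

An automorphism `F` is a sliding block code of some radius `R`, and it fixes `1^∞`: otherwise
`F(…1 0 1…)` vanishes outside `[-R, R]`, and splicing two far apart copies of it yields a point
whose preimage contains `0 1^n 0` for any prescribed `n ∉ S`. Hence for `x ∈ X_{S,ℓ}` the image
`F x` has a last zero `d`, and for `y ∈ X_{S,→}` a first zero `e`. Let `m` be the first zero of
`F(…1 0 1…)`. Inserting a gap `n ∈ S` to the right of `x` creates the gap `n + (m - d)` in the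
image, so every large `n ∈ S` has `n + (m - d) ∈ S`; as `S` is not eventually periodic this
forces `d = m`. Symmetrically `e = m`, and `σ^m` is the intrinsic shift.
-/

section Words

variable {A : Type*}

-- `wordAt` maps over `List.range n` coerced to a `List ℤ`, which is a `flatMap`.
lemma wordAt_eq_map_range (x : ℤ → A) (i : ℤ) (n : ℕ) :
    wordAt x i n = (List.range n).map fun k : ℕ => x (i + k) := by
  simp [wordAt, ← List.map_eq_flatMap]

lemma wordAt_succ (x : ℤ → A) (i : ℤ) (n : ℕ) :
    wordAt x i (n + 1) = wordAt x i n ++ [x (i + n)] := by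
  simp [wordAt_eq_map_range, List.range_succ]

lemma wordAt_succ' (x : ℤ → A) (i : ℤ) (n : ℕ) :
    wordAt x i (n + 1) = x i :: wordAt x (i + 1) n := by
  simp [wordAt_eq_map_range, List.range_succ_eq_map, add_assoc, add_comm (1 : ℤ)]

lemma wordAt_shiftPow (x : ℤ → A) (k i : ℤ) (n : ℕ) :
    wordAt (shiftPow k x) i n = wordAt x (i + k) n := by
  simp only [wordAt_eq_map_range, shiftPow, add_right_comm]

lemma wordAt_eq_replicate {x : ℤ → A} {i : ℤ} {n : ℕ} {c : A}
    (h : ∀ k : ℕ, k < n → x (i + k) = c) : wordAt x i n = List.replicate n c :=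
  List.eq_replicate_iff.2 ⟨by simp [wordAt_eq_map_range], by simpa [wordAt_eq_map_range]⟩

end Words

lemma head?_flatten_map_genWord_ne (l : List ℕ) : (l.map genWord).flatten.head? ≠ some true := by
  cases l <;> simp [genWord]

lemma exists_of_replicate_append_eq {n : ℕ} {rest s w : List Bool}
    (h : List.replicate n true ++ rest = s ++ false :: w) :
    ∃ s', s = List.replicate n true ++ s' ∧ rest = s' ++ false :: w := by
  induction n generalizing s with
  | zero => exact ⟨s, rfl, h⟩
  | succ n ih =>
    obtain _ | ⟨c, s⟩ := s
    · simp [List.replicate_succ] at h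
    · simp only [List.replicate_succ, List.cons_append, List.cons.injEq] at h
      obtain ⟨s', rfl, hs'⟩ := ih h.2
      exact ⟨s', by simp [← h.1, List.replicate_succ], hs'⟩

lemma mem_of_genWord_append_infix {g : ℕ} :
    ∀ {l : List ℕ}, genWord g ++ [false] <:+: (l.map genWord).flatten → g ∈ l
  | [], h => by simpa using h.length_le
  | n :: l, ⟨s, t, h⟩ => by
    simp only [List.map_cons, List.flatten_cons, genWord] at h
    obtain _ | ⟨c, s⟩ := s
    · simp only [List.nil_append, List.cons_append, List.cons.injEq, true_and,
        List.append_assoc] at h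
      obtain ⟨s', hs', hrest⟩ := exists_of_replicate_append_eq h.symm
      obtain _ | ⟨c', s'⟩ := s'
      · simp_all
      · have hc' : c' = true :=
          List.eq_of_mem_replicate (hs' ▸ List.mem_append_right _ List.mem_cons_self)
        exact absurd (by simp [hrest, hc']) (head?_flatten_map_genWord_ne l)
    · simp only [List.cons_append, List.cons.injEq, List.append_assoc] at h
      obtain ⟨s', -, hrest⟩ := exists_of_replicate_append_eq h.2.symm
      exact List.mem_cons_of_mem _
        (mem_of_genWord_append_infix ⟨s', t, by simp [hrest, genWord]⟩)

def IsGap (x : ℤ → Bool) (i : ℤ) (g : ℕ) : Prop :=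
  x i = false ∧ x (i + g + 1) = false ∧ ∀ k, i < k → k ≤ i + g → x k = true

def IsLastZero (x : ℤ → Bool) (d : ℤ) : Prop :=
  x d = false ∧ ∀ j, d < j → x j = true

def IsFirstZero (x : ℤ → Bool) (e : ℤ) : Prop :=
  x e = false ∧ ∀ j, j < e → x j = true

lemma IsGap.wordAt_eq {x : ℤ → Bool} {i : ℤ} {g : ℕ} (h : IsGap x i g) :
    wordAt x i (g + 2) = genWord g ++ [false] := by
  have hones : wordAt x (i + 1) g = List.replicate g true :=
    wordAt_eq_replicate fun k hk => h.2.2 _ (by omega) (by omega)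
  rw [wordAt_succ, wordAt_succ', hones, h.1,
    show i + ((g + 1 : ℕ) : ℤ) = i + g + 1 by push_cast; ring, h.2.1, genWord]

lemma IsGap.congr {x y : ℤ → Bool} {i : ℤ} {g : ℕ} (h : IsGap x i g)
    (hxy : ∀ j, i ≤ j → j ≤ i + g + 1 → x j = y j) : IsGap y i g :=
  ⟨(hxy i le_rfl (by omega)).symm.trans h.1, (hxy _ (by omega) le_rfl).symm.trans h.2.1,
    fun k hk₁ hk₂ => (hxy k (by omega) (by omega)).symm.trans (h.2.2 k hk₁ hk₂)⟩

lemma IsLastZero.shiftPow {x : ℤ → Bool} {d d' k : ℤ} (h : IsLastZero x d) (hd : d' + k = d) :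
    IsLastZero (shiftPow k x) d' :=
  ⟨by simpa [_root_.shiftPow, hd] using h.1, fun j hj => h.2 (j + k) (by omega)⟩

lemma IsFirstZero.shiftPow {x : ℤ → Bool} {e e' k : ℤ} (h : IsFirstZero x e)
    (he : e' + k = e) : IsFirstZero (shiftPow k x) e' :=
  ⟨by simpa [_root_.shiftPow, he] using h.1, fun j hj => h.2 (j + k) (by omega)⟩

lemma exists_isLastZero {u : ℤ → Bool} {b : ℤ} (h : ∃ j, u j = false)
    (hb : ∀ j, b < j → u j = true) : ∃ d ≤ b, IsLastZero u d := by
  have hbdd : ∀ j, u j = false → j ≤ b := fun j hj => by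
    by_contra hjb; simp [hb j (by omega)] at hj
  obtain ⟨d, hd, hmax⟩ := Int.exists_greatest_of_bdd ⟨b, hbdd⟩ h
  exact ⟨d, hbdd d hd, hd, fun j hj => by
    by_contra h'; simpa using (hmax j (by simpa using h')).trans_lt hj⟩

lemma exists_isFirstZero {u : ℤ → Bool} {b : ℤ} (h : ∃ j, u j = false)
    (hb : ∀ j, j < b → u j = true) : ∃ e ≥ b, IsFirstZero u e := by
  have hbdd : ∀ j, u j = false → b ≤ j := fun j hj => by
    by_contra hjb; simp [hb j (by omega)] at hj
  obtain ⟨e, he, hmin⟩ := Int.exists_least_of_bdd ⟨b, hbdd⟩ h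
  exact ⟨e, hbdd e he, he, fun j hj => by
    by_contra h'; simpa using (hmin j (by simpa using h')).trans_lt' hj⟩

lemma isGap_of_isLastZero_of_isFirstZero {w u v : ℤ → Bool} {a b d : ℤ} {g : ℕ}
    (hu : ∀ j ≤ a, w j = u j) (hv : ∀ j, b ≤ j → w j = v j) (hba : b ≤ a + 1)
    (hd : IsLastZero u d) (he : IsFirstZero v (d + g + 1)) (hda : d ≤ a)
    (hbe : b ≤ d + g + 1) : IsGap w d g :=
  ⟨(hu d hda).trans hd.1, (hv _ hbe).trans he.1, fun k hk₁ hk₂ =>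
    if hka : k ≤ a then (hu k hka).trans (hd.2 k hk₁)
    else (hv k (by omega)).trans (he.2 k (by omega))⟩

section SGap

variable {S : Set ℕ}

lemma mem_of_isGap {x : ℤ → Bool} (hx : x ∈ SGap S) {i : ℤ} {g : ℕ} (h : IsGap x i g) :
    g ∈ S := by
  obtain ⟨_, ⟨l, hl, rfl⟩, hw⟩ := hx i (g + 2)
  exact hl g (mem_of_genWord_append_infix (h.wordAt_eq ▸ hw))

/-- The last two conjuncts locate the block still open at the right end of the window, so that
closing it exhibits a gap of `x`. -/
lemma wordAt_eq_blocks {x : ℤ → Bool} (hx : ∀ i g, IsGap x i g → g ∈ S) (i : ℤ) (n : ℕ) :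
    (∃ a, wordAt x i n = List.replicate a true) ∨
      ∃ (a : ℕ) (l : List ℕ) (b : ℕ), (∀ m ∈ l, m ∈ S) ∧
        wordAt x i n = List.replicate a true ++ (l.map genWord).flatten ++ genWord b ∧
        x (i + n - b - 1) = false ∧ ∀ k, i + n - b - 1 < k → k < i + n → x k = true := by
  induction n with
  | zero => exact .inl ⟨0, rfl⟩
  | succ n ih =>
    rw [wordAt_succ]
    push_cast
    rcases ih with ⟨a, ha⟩ | ⟨a, l, b, hl, hw, hb, hones⟩ <;> cases hc : x (i + n)
    · exact .inr ⟨a, [], 0, by simp, by simp [ha, genWord], by rw [← hc]; congr 1; omega, by omega⟩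
    · exact .inl ⟨a + 1, by simp [ha, List.replicate_succ']⟩
    · refine .inr ⟨a, l ++ [b], 0, ?_, by simp [hw, genWord], by rw [← hc]; congr 1; omega,
        by omega⟩
      have : IsGap x (i + n - b - 1) b :=
        ⟨hb, by rw [← hc]; congr 1; omega, fun k hk₁ hk₂ => hones k hk₁ (by omega)⟩
      simpa [or_imp, forall_and] using ⟨hl, hx _ _ this⟩
    · refine .inr ⟨a, l, b + 1, hl, ?_, by rw [← hb]; congr 1; omega, fun k hk₁ hk₂ => ?_⟩
      · simp [hw, genWord, List.replicate_succ']
      · rcases (show k < i + n ∨ k = i + n by omega) with hk | rfl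
        exacts [hones k (by omega) hk, hc]

lemma replicate_isSuffix_genWord {a A : ℕ} (h : a ≤ A) : List.replicate a true <:+ genWord A :=
  ⟨false :: List.replicate (A - a) true, by
    rw [genWord, List.cons_append, ← List.replicate_add, Nat.sub_add_cancel h]⟩

lemma genWord_isPrefix_genWord {b B : ℕ} (h : b ≤ B) : genWord b <+: genWord B :=
  ⟨List.replicate (B - b) true, by
    rw [genWord, genWord, List.cons_append, ← List.replicate_add, Nat.add_sub_cancel' h]⟩

theorem mem_sGap_iff (hS : S.Infinite) {x : ℤ → Bool} :
    x ∈ SGap S ↔ ∀ i g, IsGap x i g → g ∈ S := by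
  refine ⟨fun hx i g => mem_of_isGap hx, fun hx i n => ?_⟩
  rcases wordAt_eq_blocks hx i n with ⟨a, ha⟩ | ⟨a, l, b, hl, hw, -⟩
  · obtain ⟨A, hA, haA⟩ := hS.exists_gt a
    exact ⟨_, ⟨[A], by simpa using hA, rfl⟩,
      ha ▸ by simpa using (replicate_isSuffix_genWord haA.le).isInfix⟩
  · obtain ⟨A, hA, haA⟩ := hS.exists_gt a
    obtain ⟨B, hB, hbB⟩ := hS.exists_gt b
    obtain ⟨s, hs⟩ := replicate_isSuffix_genWord haA.le
    obtain ⟨t, ht⟩ := genWord_isPrefix_genWord hbB.le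
    refine ⟨_, ⟨A :: l ++ [B], by simpa [or_imp, forall_and] using ⟨hA, hl, hB⟩, rfl⟩, s, t, ?_⟩
    simp [hw, ← hs, ← ht]

lemma isOpen_setOf_isGap (i : ℤ) (g : ℕ) : IsOpen {x : ℤ → Bool | IsGap x i g} := by
  have hcoord : ∀ (k : ℤ) (c : Bool), IsOpen {x : ℤ → Bool | x k = c} := fun k c =>
    show IsOpen ((fun x : ℤ → Bool => x k) ⁻¹' {c}) from
      (isOpen_discrete {c}).preimage (continuous_apply k)
  have : {x : ℤ → Bool | IsGap x i g} = {x | x i = false} ∩ {x | x (i + g + 1) = false} ∩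
      ⋂ k ∈ Finset.Ioc i (i + g), {x | x k = true} := by
    ext x; simp [IsGap, and_assoc]
  rw [this]
  exact ((hcoord _ _).inter (hcoord _ _)).inter (isOpen_biInter_finset fun k _ => hcoord k true)

lemma isClosed_sGap (hS : S.Infinite) : IsClosed (SGap S) := by
  have : SGap S = ⋂ (i : ℤ) (g : ℕ), {x | IsGap x i g → g ∈ S} := by
    ext x; simp [mem_sGap_iff hS]
  rw [this]
  refine isClosed_iInter fun i => isClosed_iInter fun g => ?_
  by_cases hg : g ∈ S
  · simp [hg]
  · simp only [hg, imp_false]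
    exact (isOpen_setOf_isGap i g).isClosed_compl

lemma shiftPow_mem_sGap (k : ℤ) {x : ℤ → Bool} (hx : x ∈ SGap S) : shiftPow k x ∈ SGap S :=
  fun i n => wordAt_shiftPow x k i n ▸ hx (i + k) n

def splice (k : ℤ) (x y : ℤ → Bool) : ℤ → Bool := fun j => if j ≤ k then x j else y j

lemma splice_mem_sGap (hS : S.Infinite) {x y : ℤ → Bool} (hx : x ∈ SGap S) (hy : y ∈ SGap S)
    {k : ℤ} (hxk : x k = false) (hyk : y k = false) : splice k x y ∈ SGap S := by
  refine (mem_sGap_iff hS).2 fun i g hgap => ?_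
  by_cases hleft : i + g + 1 ≤ k
  · exact mem_of_isGap hx (hgap.congr fun j _ hj => if_pos (by omega))
  by_cases hright : k ≤ i
  · refine mem_of_isGap hy (hgap.congr fun j hj _ => ?_)
    by_cases hjk : j = k
    · simp [splice, hjk, hxk, hyk]
    · exact if_neg (by omega)
  · have := hgap.2.2 k (by omega) (by omega)
    simp [splice, hxk] at this

def singleZero : ℤ → Bool := fun j => j ≠ 0

def twoZeros (n : ℕ) : ℤ → Bool := fun j => j ≠ 0 ∧ j ≠ n + 1

lemma allOnes_mem_sGap (hS : S.Infinite) : (fun _ => true) ∈ SGap S :=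
  (mem_sGap_iff hS).2 fun _ _ h => absurd h.1 (by simp)

lemma singleZero_mem_sGap (hS : S.Infinite) : singleZero ∈ SGap S :=
  (mem_sGap_iff hS).2 fun i g ⟨h₁, h₂, _⟩ => by simp [singleZero] at h₁ h₂; omega

lemma twoZeros_mem_sGap (hS : S.Infinite) {n : ℕ} (hn : n ∈ S) : twoZeros n ∈ SGap S :=
  (mem_sGap_iff hS).2 fun i g ⟨h₁, h₂, _⟩ => by
    simp only [twoZeros, ne_eq, decide_eq_false_iff_not, not_and, not_not] at h₁ h₂
    obtain rfl : g = n := by omega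
    exact hn

lemma isLastZero_singleZero : IsLastZero singleZero 0 :=
  ⟨by simp [singleZero], fun j hj => by simp [singleZero]; omega⟩

lemma isFirstZero_singleZero : IsFirstZero singleZero 0 :=
  ⟨by simp [singleZero], fun j hj => by simp [singleZero]; omega⟩

lemma singleZero_mem_sGapLeft (hS : S.Infinite) : singleZero ∈ SGapLeft S :=
  ⟨singleZero_mem_sGap hS, isLastZero_singleZero⟩

lemma singleZero_mem_sGapRight (hS : S.Infinite) : singleZero ∈ SGapRight S :=
  ⟨singleZero_mem_sGap hS, isFirstZero_singleZero⟩

end SGap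

section Periodicity

variable {S T : Set ℕ}

lemma EventuallyPeriodic.of_compl (h : EventuallyPeriodic Tᶜ) : EventuallyPeriodic T := by
  obtain ⟨p, hp, N, hN⟩ := h
  exact ⟨p, hp, N, fun n hn => not_iff_not.1 (hN n hn)⟩

lemma add_mul_mem_of_add_mem {s N : ℕ} (h : ∀ n ≥ N, n ∈ T → n + s ∈ T) {n : ℕ} (hn : N ≤ n)
    (hnT : n ∈ T) (j : ℕ) : n + s * j ∈ T := by
  induction j with
  | zero => simpa using hnT
  | succ j ih => simpa [mul_add, ← add_assoc] using h _ (by omega) ih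

/-- Each residue class mod `s` switches from outside `T` to inside `T` at most once, so the
switching points are finite in number. -/
lemma eventuallyPeriodic_of_add_mem {s N : ℕ} (hs : 0 < s) (h : ∀ n ≥ N, n ∈ T → n + s ∈ T) :
    EventuallyPeriodic T := by
  set D := {n | N ≤ n ∧ n ∉ T ∧ n + s ∈ T}
  have hinj : D.InjOn (· % s) := by
    suffices ∀ n ∈ D, ∀ n' ∈ D, n % s = n' % s → ¬ n < n' by
      intro n hn n' hn' hmod
      by_contra hne
      rcases Nat.lt_or_gt_of_ne hne with hlt | hlt
      exacts [this n hn n' hn' hmod hlt, this n' hn' n hn hmod.symm hlt]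
    rintro n ⟨hNn, -, hns⟩ n' ⟨-, hn', -⟩ hmod hlt
    obtain ⟨j, hj⟩ := (Nat.modEq_iff_dvd' hlt.le).1 hmod
    obtain ⟨j, rfl⟩ := Nat.exists_eq_succ_of_ne_zero (by rintro rfl; omega : j ≠ 0)
    rw [Nat.mul_succ] at hj
    exact hn' (by
      simpa [show n + s + s * j = n' by omega] using
        add_mul_mem_of_add_mem h (n := n + s) (by omega) hns j)
  obtain ⟨B, hB⟩ := (((Set.finite_lt_nat s).subset (by
    rintro _ ⟨n, -, rfl⟩; exact Nat.mod_lt n hs)).of_finite_image hinj).bddAbove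
  refine ⟨s, hs, max N (B + 1), fun n hn => ⟨h n (by omega), fun hns => ?_⟩⟩
  by_contra hnT
  exact absurd (hB ⟨by omega, hnT, hns⟩) (by omega)

lemma exists_ge_notMem (hS : ¬ EventuallyPeriodic S) (N : ℕ) : ∃ n ≥ N, n ∉ S := by
  by_contra! h
  exact hS (eventuallyPeriodic_of_add_mem (N := N) one_pos fun n hn _ => h _ (by omega))

lemma eq_zero_of_add_mem (hS : ¬ EventuallyPeriodic S) {t : ℤ} {N : ℕ}
    (h : ∀ n ∈ S, N ≤ n → ∃ m ∈ S, (m : ℤ) = n + t) : t = 0 := by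
  rcases lt_trichotomy t 0 with ht | ht | ht
  · refine absurd (EventuallyPeriodic.of_compl ?_) hS
    refine eventuallyPeriodic_of_add_mem (s := t.natAbs) (N := N) (by omega) fun n hn hnS hns => ?_
    obtain ⟨m, hm, hmn⟩ := h _ hns (by omega)
    exact hnS (by rwa [show m = n by omega] at hm)
  · exact ht
  · refine absurd (eventuallyPeriodic_of_add_mem (s := t.natAbs) (N := N) (by omega)
      fun n hn hnS => ?_) hS
    obtain ⟨m, hm, hmn⟩ := h n hnS hn
    rwa [show m = n + t.natAbs by omega] at hm

end Periodicity

section LocalRule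

open Filter Topology Uniformity

lemma shiftPow_shiftPow {A : Type*} (a b : ℤ) (x : ℤ → A) :
    shiftPow a (shiftPow b x) = shiftPow (a + b) x := by
  funext i; simp [shiftPow, add_assoc]

lemma shiftPow_zero {A : Type*} (x : ℤ → A) : shiftPow 0 x = x := by
  funext i; simp [shiftPow]

lemma shiftPow_one {A : Type*} (x : ℤ → A) : shiftPow 1 x = shiftMap x := rfl

lemma map_shiftPow_of_map_shiftMap {A : Type*} {X : Set (ℤ → A)} {H : (ℤ → A) → (ℤ → A)}
    (hX : ∀ k, ∀ x ∈ X, shiftPow k x ∈ X) (hH : ∀ x ∈ X, H (shiftMap x) = shiftMap (H x))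
    (k : ℤ) (x : ℤ → A) (hx : x ∈ X) : H (shiftPow k x) = shiftPow k (H x) := by
  induction k using Int.induction_on with
  | zero => simp only [shiftPow_zero]
  | succ k ih =>
    rw [add_comm, ← shiftPow_shiftPow, shiftPow_one, hH _ (hX k x hx), ih, ← shiftPow_one,
      shiftPow_shiftPow]
  | pred k ih =>
    have h := hH _ (hX (-k - 1) x hx)
    rw [← shiftPow_one, ← shiftPow_one, shiftPow_shiftPow, show (1 : ℤ) + (-k - 1) = -k by ring,
      ih] at h
    funext i
    have hi := congrFun h (i - 1)
    simp only [shiftPow, sub_add_cancel] at hi ⊢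
    rw [← hi]
    congr 1
    ring

def HasLocalRadius {A B : Type*} (X : Set (ℤ → A)) (H : (ℤ → A) → (ℤ → B)) (r : ℕ) : Prop :=
  ∀ x ∈ X, ∀ y ∈ X, ∀ i, (∀ j, |j - i| ≤ (r : ℤ) → x j = y j) → H x i = H y i

/-- Heine–Cantor, for the product uniformity of `ℤ → Bool`. -/
lemma exists_finite_coords_of_continuousOn {X : Set (ℤ → Bool)} (hX : IsCompact X)
    {f : (ℤ → Bool) → Bool} (hf : ContinuousOn f X) :
    ∃ I : Set ℤ, I.Finite ∧ ∀ x ∈ X, ∀ y ∈ X, (∀ j ∈ I, x j = y j) → f x = f y := by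
  have hdiag : {p : Bool × Bool | p.1 = p.2} ∈ 𝓤 Bool := by
    rw [show 𝓤 Bool = 𝓟 SetRel.id from rfl]; exact mem_principal_self _
  have h := hX.uniformContinuousOn_of_continuous hf hdiag
  rw [mem_map, mem_inf_principal, Pi.uniformity, mem_iInf] at h
  obtain ⟨I, hI, V, hV, hU⟩ := h
  refine ⟨I, hI, fun x hx y hy hxy => ?_⟩
  have : (x, y) ∈ ⋂ i, V i := Set.mem_iInter.2 fun i => by
    obtain ⟨W, hW, hWV⟩ := hV i
    rw [show 𝓤 Bool = 𝓟 SetRel.id from rfl, mem_principal] at hW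
    exact hWV (hW (show (x i.1, y i.1) ∈ SetRel.id from hxy i i.2))
  exact (hU ▸ this) ⟨hx, hy⟩

lemma exists_hasLocalRadius {X : Set (ℤ → Bool)} (hX : IsCompact X)
    (hXshift : ∀ k, ∀ x ∈ X, shiftPow k x ∈ X) {H : (ℤ → Bool) → (ℤ → Bool)}
    (hH : ContinuousOn H X) (hHshift : ∀ k, ∀ x ∈ X, H (shiftPow k x) = shiftPow k (H x)) :
    ∃ r, HasLocalRadius X H r := by
  obtain ⟨I, hI, hIH⟩ := exists_finite_coords_of_continuousOn hX
    ((continuous_apply 0).comp_continuousOn hH)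
  obtain ⟨r, hr⟩ := (hI.image Int.natAbs).bddAbove
  refine ⟨r, fun x hx y hy i hxy => ?_⟩
  have := hIH _ (hXshift i x hx) _ (hXshift i y hy) fun j hj =>
    hxy (j + i) (by have := hr ⟨j, hj, rfl⟩; simp only [add_sub_cancel_right, abs_le]; omega)
  simpa [hHshift i x hx, hHshift i y hy, shiftPow] using this

variable {X : Set (ℤ → Bool)} {H : (ℤ → Bool) → (ℤ → Bool)} {r : ℕ} {x y : ℤ → Bool}

lemma HasLocalRadius.eq_of_eqOn_Iic (hH : HasLocalRadius X H r) (hx : x ∈ X) (hy : y ∈ X)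
    {a : ℤ} (hxy : ∀ j ≤ a, x j = y j) : ∀ j ≤ a - r, H x j = H y j :=
  fun j hj => hH x hx y hy j fun k hk => hxy k (by rw [abs_le] at hk; omega)

lemma HasLocalRadius.eq_of_eqOn_Ici (hH : HasLocalRadius X H r) (hx : x ∈ X) (hy : y ∈ X)
    {b : ℤ} (hxy : ∀ j, b ≤ j → x j = y j) : ∀ j, b + r ≤ j → H x j = H y j :=
  fun j hj => hH x hx y hy j fun k hk => hxy k (by rw [abs_le] at hk; omega)

end LocalRule

section Automorphism

variable {S : Set ℕ} {F G : (ℤ → Bool) → (ℤ → Bool)} {R R' : ℕ}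

theorem map_allOnes_eq_allOnes (hS : S.Infinite) (hnp : ¬ EventuallyPeriodic S)
    (hFX : Set.MapsTo F (SGap S) (SGap S)) (hFR : HasLocalRadius (SGap S) F R)
    (hFshift : ∀ k, ∀ x ∈ SGap S, F (shiftPow k x) = shiftPow k (F x))
    (hGX : Set.MapsTo G (SGap S) (SGap S)) (hGR : HasLocalRadius (SGap S) G R')
    (hGshift : ∀ k, ∀ x ∈ SGap S, G (shiftPow k x) = shiftPow k (G x))
    (hGF : ∀ x ∈ SGap S, G (F x) = x) :
    F (fun _ => true) = fun _ => true := by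
  have hone := allOnes_mem_sGap hS
  have hconst : ∀ j, F (fun _ => true) j = F (fun _ => true) 0 := fun j => by
    have h := congrFun (hFshift j _ hone) 0
    rw [show shiftPow j (fun _ : ℤ => true) = fun _ => true from rfl] at h
    simpa [shiftPow] using h.symm
  suffices F (fun _ => true) 0 = true by funext j; rw [hconst, this]
  by_contra h
  have h0 := Bool.of_not_eq_true h
  have hp := singleZero_mem_sGap hS
  set v := F singleZero
  have hv : v ∈ SGap S := hFX hp
  have hvout : ∀ j, j < -(R : ℤ) ∨ (R : ℤ) < j → v j = false := fun j hj => by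
    rw [← h0, ← hconst j]
    refine hFR _ hp _ hone j fun k hk => ?_
    simp only [singleZero, ne_eq, decide_eq_true_eq]
    rw [abs_le] at hk; omega
  obtain ⟨n, hn, hnS⟩ := exists_ge_notMem hnp (2 * R + 2 * R' + 2)
  have hv' := shiftPow_mem_sGap (-(n + 1)) hv
  have hz := splice_mem_sGap hS hv hv' (k := R + 1) (hvout _ (by omega))
    (hvout _ (by omega))
  have hzl : ∀ j ≤ (n : ℤ) - R, splice (R + 1) v (shiftPow (-(n + 1)) v) j = v j := fun j hj => by
    by_cases hjR : j ≤ R + 1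
    · exact if_pos hjR
    · rw [splice, if_neg hjR, shiftPow, hvout _ (by omega), hvout _ (by omega)]
  have hzr : ∀ j, (R : ℤ) + 1 ≤ j →
      splice (R + 1) v (shiftPow (-(n + 1)) v) j = shiftPow (-(n + 1)) v j := fun j hj => by
    by_cases hjR : j = R + 1
    · rw [splice, if_pos hjR.le, shiftPow, hvout _ (by omega), hvout _ (by omega)]
    · exact if_neg (by omega)
  have hGl := hGR.eq_of_eqOn_Iic hz hv hzl
  have hGr := hGR.eq_of_eqOn_Ici hz hv' hzr
  rw [hGF _ hp] at hGl
  rw [hGshift _ _ hv, hGF _ hp] at hGr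
  exact hnS (mem_of_isGap (hGX hz) (isGap_of_isLastZero_of_isFirstZero hGl hGr (by omega)
    isLastZero_singleZero (isFirstZero_singleZero.shiftPow (by ring)) (by omega)
    (by omega)))

theorem exists_isLastZero_map (hS : S.Infinite) (hFR : HasLocalRadius (SGap S) F R)
    (hF1 : F (fun _ => true) = fun _ => true) (hinj : Set.InjOn F (SGap S)) {x : ℤ → Bool}
    (hx : x ∈ SGapLeft S) : ∃ d ≤ (R : ℤ), IsLastZero (F x) d := by
  have hone := allOnes_mem_sGap hS
  refine exists_isLastZero ?_ fun j hj => ?_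
  · by_contra! h
    have := hinj hx.1 hone (by rw [hF1]; funext j; simpa using h j)
    simpa [this] using hx.2.1
  · rw [hFR.eq_of_eqOn_Ici hx.1 hone (b := 1) (fun j hj => hx.2.2 j (by omega)) j (by omega), hF1]

theorem exists_isFirstZero_map (hS : S.Infinite) (hFR : HasLocalRadius (SGap S) F R)
    (hF1 : F (fun _ => true) = fun _ => true) (hinj : Set.InjOn F (SGap S)) {y : ℤ → Bool}
    (hy : y ∈ SGapRight S) : ∃ e ≥ -(R : ℤ), IsFirstZero (F y) e := by
  have hone := allOnes_mem_sGap hS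
  refine exists_isFirstZero ?_ fun j hj => ?_
  · by_contra! h
    have := hinj hy.1 hone (by rw [hF1]; funext j; simpa using h j)
    simpa [this] using hy.2.1
  · rw [hFR.eq_of_eqOn_Iic hy.1 hone (a := -1) (fun j hj => hy.2.2 j (by omega)) j (by omega), hF1]

theorem isLastZero_map_unique (hS : S.Infinite) (hnp : ¬ EventuallyPeriodic S)
    (hFX : Set.MapsTo F (SGap S) (SGap S)) (hFR : HasLocalRadius (SGap S) F R)
    (hFshift : ∀ k, ∀ x ∈ SGap S, F (shiftPow k x) = shiftPow k (F x)) {x : ℤ → Bool}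
    (hx : x ∈ SGapLeft S) {d m : ℤ} (hd : IsLastZero (F x) d) (hdR : d ≤ R)
    (hm : IsFirstZero (F singleZero) m) (hmR : -(R : ℤ) ≤ m) : d = m := by
  have hp := singleZero_mem_sGap hS
  suffices m - d = 0 by omega
  refine eq_zero_of_add_mem hnp (N := 2 * R + 1) fun n hn hnR => ?_
  have hxn := splice_mem_sGap hS hx.1 (twoZeros_mem_sGap hS hn) hx.2.1 (by simp [twoZeros])
  have hl : ∀ j ≤ (n : ℤ), splice 0 x (twoZeros n) j = x j := fun j hj => by
    by_cases hj0 : j ≤ 0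
    · exact if_pos hj0
    · simp [splice, twoZeros, hj0, hx.2.2 j (by omega)]; omega
  have hr : ∀ j, 1 ≤ j → splice 0 x (twoZeros n) j = shiftPow (-(n + 1)) singleZero j :=
    fun j hj => by
      simp only [splice, twoZeros, singleZero, shiftPow, if_neg (show ¬ j ≤ 0 by omega)]
      rw [Bool.eq_iff_iff]
      simp
      omega
  have hFl := hFR.eq_of_eqOn_Iic hxn hx.1 hl
  have hFr := hFR.eq_of_eqOn_Ici hxn (shiftPow_mem_sGap _ hp) hr
  rw [hFshift _ _ hp] at hFr
  obtain ⟨g, hg⟩ : ∃ g : ℕ, (g : ℤ) = n + (m - d) := ⟨_, Int.toNat_of_nonneg (by omega)⟩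
  exact ⟨g, mem_of_isGap (hFX hxn) (isGap_of_isLastZero_of_isFirstZero hFl hFr (by omega) hd
    (hm.shiftPow (by omega)) (by omega) (by omega)), hg⟩

theorem isFirstZero_map_unique (hS : S.Infinite) (hnp : ¬ EventuallyPeriodic S)
    (hFX : Set.MapsTo F (SGap S) (SGap S)) (hFR : HasLocalRadius (SGap S) F R)
    (hFshift : ∀ k, ∀ x ∈ SGap S, F (shiftPow k x) = shiftPow k (F x)) {y : ℤ → Bool}
    (hy : y ∈ SGapRight S) {e m : ℤ} (he : IsFirstZero (F y) e) (heR : -(R : ℤ) ≤ e)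
    (hm : IsLastZero (F singleZero) m) (hmR : m ≤ R) : e = m := by
  have hp := singleZero_mem_sGap hS
  suffices e - m = 0 by omega
  refine eq_zero_of_add_mem hnp (N := 2 * R + 1) fun n hn hnR => ?_
  have hq := shiftPow_mem_sGap (n + 1) (twoZeros_mem_sGap hS hn)
  have hyn := splice_mem_sGap hS hq hy.1 (by simp [shiftPow, twoZeros]) hy.2.1
  have hl : ∀ j ≤ -1,
      splice 0 (shiftPow (n + 1) (twoZeros n)) y j = shiftPow (n + 1) singleZero j :=
    fun j hj => by
      simp only [splice, twoZeros, singleZero, shiftPow, if_pos (show j ≤ 0 by omega)]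
      rw [Bool.eq_iff_iff]
      simp
      omega
  have hr : ∀ j, -(n : ℤ) ≤ j → splice 0 (shiftPow (n + 1) (twoZeros n)) y j = y j := fun j hj => by
    rcases lt_trichotomy j 0 with hj0 | rfl | hj0
    · simp [splice, shiftPow, twoZeros, hj0.le, hy.2.2 j hj0]; omega
    · simp [splice, shiftPow, twoZeros, hy.2.1]
    · exact if_neg (by omega)
  have hFl := hFR.eq_of_eqOn_Iic hyn (shiftPow_mem_sGap _ hp) hl
  have hFr := hFR.eq_of_eqOn_Ici hyn hy.1 hr
  rw [hFshift _ _ hp] at hFl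
  obtain ⟨g, hg⟩ : ∃ g : ℕ, (g : ℤ) = n + (e - m) := ⟨_, Int.toNat_of_nonneg (by omega)⟩
  have he' : IsFirstZero (F y) (m - (n + 1) + g + 1) := by
    rwa [show m - (n + 1) + g + 1 = e by omega]
  exact ⟨g, mem_of_isGap (hFX hyn) (isGap_of_isLastZero_of_isFirstZero hFl hFr (by omega)
    (hm.shiftPow (by omega)) he' (by omega) (by omega)), hg⟩

lemma exists_hasLocalRadius_of_sGap (hS : S.Infinite) {H : (ℤ → Bool) → (ℤ → Bool)}
    (hH : ContinuousOn H (SGap S)) (hHσ : ∀ x ∈ SGap S, H (shiftMap x) = shiftMap (H x)) :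
    ∃ r, HasLocalRadius (SGap S) H r :=
  exists_hasLocalRadius (isClosed_sGap hS).isCompact (fun k _ => shiftPow_mem_sGap k) hH
    (map_shiftPow_of_map_shiftMap (fun k _ => shiftPow_mem_sGap k) hHσ)

theorem exists_isLastZero_isFirstZero_map (hS : S.Infinite) (hnp : ¬ EventuallyPeriodic S)
    (hF : IsAutomorphism (SGap S) F) : ∃ m, (∀ x ∈ SGapLeft S, IsLastZero (F x) m) ∧
      ∀ y ∈ SGapRight S, IsFirstZero (F y) m := by
  obtain ⟨hFX, hFc, hFσ, G, hGX, hGc, hGσ, hGF, -⟩ := hF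
  have hFshift := map_shiftPow_of_map_shiftMap (fun k _ => shiftPow_mem_sGap k) hFσ
  have hGshift := map_shiftPow_of_map_shiftMap (fun k _ => shiftPow_mem_sGap k) hGσ
  obtain ⟨R, hFR⟩ := exists_hasLocalRadius_of_sGap hS hFc hFσ
  obtain ⟨R', hGR⟩ := exists_hasLocalRadius_of_sGap hS hGc hGσ
  have hF1 := map_allOnes_eq_allOnes hS hnp hFX hFR hFshift hGX hGR hGshift hGF
  have hinj : Set.InjOn F (SGap S) := fun x hx y hy h => by rw [← hGF x hx, h, hGF y hy]
  have hpL := singleZero_mem_sGapLeft hS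
  obtain ⟨m, hmR, hm⟩ := exists_isFirstZero_map hS hFR hF1 hinj (singleZero_mem_sGapRight hS)
  obtain ⟨d, hdR, hd⟩ := exists_isLastZero_map hS hFR hF1 hinj hpL
  obtain rfl := isLastZero_map_unique hS hnp hFX hFR hFshift hpL hd hdR hm hmR
  refine ⟨d, fun x hx => ?_, fun y hy => ?_⟩
  · obtain ⟨d', hd'R, hd'⟩ := exists_isLastZero_map hS hFR hF1 hinj hx
    rwa [← isLastZero_map_unique hS hnp hFX hFR hFshift hx hd' hd'R hm hmR]
  · obtain ⟨e, heR, he⟩ := exists_isFirstZero_map hS hFR hF1 hinj hy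
    rwa [← isFirstZero_map_unique hS hnp hFX hFR hFshift hy he heR hd hdR]

end Automorphism

theorem stmt12_general (S : Set ℕ) (hinf : S.Infinite)
    (hnp : ¬ EventuallyPeriodic S)
    (F : (ℤ → Bool) → (ℤ → Bool)) (hF : IsAutomorphism (SGap S) F) :
    ∃ i : ℤ, F '' SGapLeft S ⊆ shiftPow i '' SGapLeft S ∧
      F '' SGapRight S ⊆ shiftPow i '' SGapRight S := by
  obtain ⟨m, hleft, hright⟩ := exists_isLastZero_isFirstZero_map hinf hnp hF
  have hFX : Set.MapsTo F (SGap S) (SGap S) := hF.1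
  have hback : ∀ u : ℤ → Bool, shiftPow (-m) (shiftPow m u) = u := fun u => by
    rw [shiftPow_shiftPow, neg_add_cancel, shiftPow_zero]
  refine ⟨-m, ?_, ?_⟩
  · rintro _ ⟨x, hx, rfl⟩
    exact ⟨_, ⟨shiftPow_mem_sGap m (hFX hx.1), (hleft x hx).shiftPow (zero_add m)⟩, hback _⟩
  · rintro _ ⟨y, hy, rfl⟩
    exact ⟨_, ⟨shiftPow_mem_sGap m (hFX hy.1), (hright y hy).shiftPow (zero_add m)⟩, hback _⟩

/-- For a non-sofic `S`-gap shift, every automorphism `F` has an intrinsic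
shift: there is `i ∈ ℤ` with `F(X_{S,ℓ}) ⊆ σ^i(X_{S,ℓ})` and `F(X_{S,→}) ⊆ σ^i(X_{S,→})`. -/
theorem stmt12 (S : Set ℕ) (hS : S.Nonempty) (hinf : S.Infinite)
    (hnp : ¬ EventuallyPeriodic S)
    (F : (ℤ → Bool) → (ℤ → Bool)) (hF : IsAutomorphism (SGap S) F) :
    ∃ i : ℤ, F '' SGapLeft S ⊆ shiftPow i '' SGapLeft S ∧
      F '' SGapRight S ⊆ shiftPow i '' SGapRight S :=
  stmt12_general S hinf hnp F hF
end
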